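/- arXiv:1504.06834 — 3 statements merged into one kernel-verified Lean document; each statement's English description precedes it below -/
import Mathlib

section
/- Let k be a field, g a Lie algebra over k, and F a commutative k-algebra equipped with a k-algebra homomorphism ε : F → k. Suppose g acts on F by derivations, i.e. there is a Lie algebra homomorphism from g to the Lie algebra of k-linear derivations of F, written X ↦ (f ↦ X▷f), and suppose ε(X▷f) = 0 for all X ∈ g and f ∈ F. Then the bracket on the tensor product g ⊗_k F defined on elementary tensors by [X⊗f, Y⊗g] = [X,Y]⊗(fg) + Y⊗(ε(f)•(X▷g)) − X⊗(ε(g)•(Y▷f)) is alternating and satisfies the Jacobi identity, so that it endows g ⊗_k F with the structure of a Lie algebra over k. -/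
open TensorProduct

section AuxBracket

variable (k : Type*) [Field k]
    (g : Type*) [LieRing g] [LieAlgebra k g]
    (F : Type*) [CommRing F] [Algebra k F]
    (ε : F →ₐ[k] k)
    (D : g →ₗ⁅k⁆ Derivation k F F)

noncomputable def innerB (X : g) (f : F) : g →ₗ[k] F →ₗ[k] g ⊗[k] F :=
  LinearMap.mk₂ k (fun Y f' => ⁅X, Y⁆ ⊗ₜ[k] (f * f') + Y ⊗ₜ[k] (ε f • (D X f'))
            - X ⊗ₜ[k] (ε f' • (D Y f)))
    (by intro Y Y' f'; simp [lie_add, add_tmul, tmul_add, smul_add]; module)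
    (by intro c Y f'; simp [map_smul, lie_smul, ← smul_tmul', smul_smul, tmul_smul]; module)
    (by intro Y f' f''; simp [mul_add, tmul_add, smul_add, add_smul]; module)
    (by intro c Y f'; simp [map_smul, mul_smul_comm, smul_smul, tmul_smul, ← smul_tmul']; module)

noncomputable def outerB : g →ₗ[k] F →ₗ[k] (g ⊗[k] F) →ₗ[k] g ⊗[k] F :=
  LinearMap.mk₂ k (fun X f => TensorProduct.lift (innerB k g F ε D X f))
    (by intro X X' f; apply TensorProduct.ext'; intro Y f'
        simp [innerB, lie_add, add_lie, add_tmul, tmul_add, smul_add]; module)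
    (by intro c X f; apply TensorProduct.ext'; intro Y f'
        simp [map_smul, innerB, smul_lie, ← smul_tmul', smul_smul, tmul_smul]; module)
    (by intro X f f'; apply TensorProduct.ext'; intro Y f''
        simp [innerB, add_mul, tmul_add, smul_add, add_tmul, add_smul]; module)
    (by intro c X f; apply TensorProduct.ext'; intro Y f'
        simp [map_smul, innerB, smul_mul_assoc, ← smul_tmul', smul_smul, tmul_smul]; module)

noncomputable def Bmap : (g ⊗[k] F) →ₗ[k] (g ⊗[k] F) →ₗ[k] g ⊗[k] F :=
  TensorProduct.lift (outerB k g F ε D)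

lemma Bmap_tmul (X Y : g) (f f' : F) :
    Bmap k g F ε D (X ⊗ₜ[k] f) (Y ⊗ₜ[k] f') =
      ⁅X, Y⁆ ⊗ₜ[k] (f * f') + Y ⊗ₜ[k] (ε f • (D X f'))
        - X ⊗ₜ[k] (ε f' • (D Y f)) := by
  simp [Bmap, outerB, innerB]

lemma Bmap_anti (x y : g ⊗[k] F) :
    Bmap k g F ε D x y + Bmap k g F ε D y x = 0 := by
  induction x using TensorProduct.induction_on with
  | zero => simp
  | tmul X f =>
    induction y using TensorProduct.induction_on with
    | zero => simp
    | tmul Y f' =>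
      simp only [Bmap_tmul, ← lie_skew X Y, neg_tmul, mul_comm f' f]
      module
    | add a b ha hb =>
      simp only [map_add, LinearMap.add_apply]
      linear_combination (norm := module) ha + hb
  | add a b ha hb =>
    simp only [map_add, LinearMap.add_apply]
    linear_combination (norm := module) ha + hb

lemma Bmap_alt (x : g ⊗[k] F) : Bmap k g F ε D x x = 0 := by
  induction x using TensorProduct.induction_on with
  | zero => simp
  | tmul X f => simp [Bmap_tmul]
  | add a b ha hb =>
    simp only [map_add, LinearMap.add_apply]
    linear_combination (norm := module) ha + hb + Bmap_anti k g F ε D a b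

lemma Bmap_jacobi (hε : ∀ (X : g) (f : F), ε (D X f) = 0) (x y z : g ⊗[k] F) :
    Bmap k g F ε D x (Bmap k g F ε D y z) =
      Bmap k g F ε D (Bmap k g F ε D x y) z +
        Bmap k g F ε D y (Bmap k g F ε D x z) := by
  induction x using TensorProduct.induction_on with
  | zero => simp
  | add a b ha hb =>
    simp only [map_add, LinearMap.add_apply]
    linear_combination (norm := module) ha + hb
  | tmul X f =>
    induction y using TensorProduct.induction_on with
    | zero => simp
    | add a b ha hb =>
      simp only [map_add, LinearMap.add_apply]
      linear_combination (norm := module) ha + hb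
    | tmul Y f' =>
      induction z using TensorProduct.induction_on with
      | zero => simp
      | add a b ha hb =>
        simp only [map_add, LinearMap.add_apply]
        linear_combination (norm := module) ha + hb
      | tmul Z f'' =>
        simp only [Bmap_tmul, map_add, map_sub, map_smul, LinearMap.add_apply,
          LinearMap.sub_apply, LinearMap.smul_apply, tmul_smul, smul_smul, hε, smul_zero,
          zero_smul, tmul_zero, zero_tmul, sub_zero, add_zero, smul_eq_mul, map_mul,
          mul_zero, zero_mul, Derivation.leibniz, LieHom.map_lie, Derivation.commutator_apply,
          lie_lie, tmul_add, tmul_sub, sub_tmul, add_tmul, smul_add, smul_sub, mul_add,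
          add_mul, ← smul_tmul']
        simp only [← lie_skew X Y, neg_tmul, smul_neg, neg_neg]
        ring_nf
        module

end AuxBracket

/-- If a Lie algebra `g` acts on a commutative algebra `F` by derivations
(via a Lie algebra homomorphism `D : g → Der_k(F)`) and `ε(X ▷ f) = 0` for all `X, f`,
then the bracket on `g ⊗[k] F` given on elementary tensors by
`[X⊗f, Y⊗g] = [X,Y]⊗(fg) + Y⊗(ε(f)•(X▷g)) − X⊗(ε(g)•(Y▷f))`
is alternating and satisfies the (Leibniz form of the) Jacobi identity; i.e. it endows
`g ⊗[k] F` with a Lie algebra structure. -/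
theorem statement0 (k : Type*) [Field k]
    (g : Type*) [LieRing g] [LieAlgebra k g]
    (F : Type*) [CommRing F] [Algebra k F]
    (ε : F →ₐ[k] k)
    (D : g →ₗ⁅k⁆ Derivation k F F)
    (hε : ∀ (X : g) (f : F), ε (D X f) = 0) :
    ∃ B : (g ⊗[k] F) →ₗ[k] (g ⊗[k] F) →ₗ[k] (g ⊗[k] F),
      (∀ (X Y : g) (f f' : F),
        B (X ⊗ₜ[k] f) (Y ⊗ₜ[k] f') =
          ⁅X, Y⁆ ⊗ₜ[k] (f * f') + Y ⊗ₜ[k] (ε f • (D X f'))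
            - X ⊗ₜ[k] (ε f' • (D Y f))) ∧
      (∀ x : g ⊗[k] F, B x x = 0) ∧
      (∀ x y z : g ⊗[k] F, B x (B y z) = B (B x y) z + B y (B x z)) := by
  exact ⟨Bmap k g F ε D, Bmap_tmul k g F ε D, Bmap_alt k g F ε D,
    Bmap_jacobi k g F ε D hε⟩
end

section
/- Let k be a field, g a finite-dimensional Lie algebra over k with basis {X_i} and dual basis {f^i} of g*. Let V be a right g-module and simultaneously a left g-comodule via a linear map ∇ : V → g ⊗ V, ∇(v) = v₍₋₁₎ ⊗ v₍₀₎, satisfying v₍₋₂₎ ∧ v₍₋₁₎ ⊗ v₍₀₎ = 0; write v·f := f(v₍₋₁₎)•v₍₀₎ for f ∈ g*. For n ≥ 0 let W^n(g,V) be the space of alternating k-multilinear maps g^n → V, with the Chevalley–Eilenberg coboundary d_CE(α)(Y_0,…,Y_n) = Σ_{i<j} (−1)^{i+j} α([Y_i,Y_j],Y_0,…,Ŷ_i,…,Ŷ_j,…,Y_n) + Σ_{j=0}^{n} (−1)^{j+1} α(Y_0,…,Ŷ_j,…,Y_n)·Y_j, and the Koszul boundary d_K(β)(Y_1,…,Y_n)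 = Σ_i β(X_i,Y_1,…,Y_n)·f^i. Then d_CE ∘ d_K + d_K ∘ d_CE = 0 on W^n(g,V) for all n ≥ 0 if and only if V is a unimodular stable anti-Yetter–Drinfeld module over g, i.e. if and only if both (i) Σ_i (v·X_i)·f^i = 0 for all v ∈ V (unimodular stability), and (ii) ∇(v·X) = v₍₋₁₎ ⊗ (v₍₀₎·X) + [v₍₋₁₎, X] ⊗ v₍₀₎ for all v ∈ V and X ∈ g (the anti-Yetter–Drinfeld condition). -/
open TensorProduct

/-- The map flipping the first two tensor factors of `g ⊗ (g ⊗ V)`. -/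
noncomputable def flip12 (k : Type*) [Field k] (g V : Type*)
    [AddCommGroup g] [Module k g] [AddCommGroup V] [Module k V] :
    (g ⊗[k] (g ⊗[k] V)) ≃ₗ[k] (g ⊗[k] (g ⊗[k] V)) :=
  (TensorProduct.assoc k g g V).symm ≪≫ₗ
    (TensorProduct.congr (TensorProduct.comm k g g) (LinearEquiv.refl k V)) ≪≫ₗ
      (TensorProduct.assoc k g g V)

/-- The action `v ↦ v·f = f(v₍₋₁₎) • v₍₀₎` associated to a coaction `cov : V → g ⊗ V`
and a functional `f ∈ g*`. -/
noncomputable def coactL (k : Type*) [Field k] (g V : Type*)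
    [AddCommGroup g] [Module k g] [AddCommGroup V] [Module k V]
    (cov : V →ₗ[k] g ⊗[k] V) (f : Module.Dual k g) : V →ₗ[k] V :=
  (TensorProduct.lid k V).toLinearMap ∘ₗ (TensorProduct.map f LinearMap.id) ∘ₗ cov

section CE

variable (k : Type*) [Field k] (g : Type*) [LieRing g] [LieAlgebra k g]
  (V : Type*) [AddCommGroup V] [Module k V]

/-- The Chevalley–Eilenberg coboundary
`d_CE(α)(Y_0,…,Y_n) = Σ_{i<j} (−1)^{i+j} α([Y_i,Y_j],Y_0,…,Ŷ_i,…,Ŷ_j,…,Y_n)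
  + Σ_j (−1)^{j+1} α(Y_0,…,Ŷ_j,…,Y_n)·Y_j`,
written as an operator on arbitrary `V`-valued cochains (here `a` is the right
`g`-action on `V`). -/
noncomputable def dCE (a : V →ₗ[k] g →ₗ[k] V) (n : ℕ)
    (γ : (Fin n → g) → V) : (Fin (n + 1) → g) → V :=
  fun Y =>
    (∑ i : Fin (n + 1), ∑ j : Fin (n + 1),
      if h : (i : ℕ) < (j : ℕ) then
        ((-1 : ℤ) ^ ((i : ℕ) + (j : ℕ))) •
          γ (fun p : Fin n =>
            (Fin.cons ⁅Y i, Y j⁆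
              (Fin.removeNth
                (⟨(i : ℕ), by have := j.isLt; omega⟩ : Fin (n - 1 + 1))
                (fun q : Fin (n - 1 + 1) =>
                  Fin.removeNth j Y (Fin.cast (by have := j.isLt; omega) q)))
              : Fin (n - 1 + 1) → g)
              (Fin.cast (by have := j.isLt; omega) p))
      else 0)
    + ∑ j : Fin (n + 1), ((-1 : ℤ) ^ ((j : ℕ) + 1)) • a (γ (Fin.removeNth j Y)) (Y j)

/-- The Koszul boundary `d_K(β)(Y_1,…,Y_n) = Σ_i β(X_i, Y_1,…,Y_n)·f^i`, written as an
operator on arbitrary `V`-valued cochains; here `b` is a basis of `g` (with dual basis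
`b.coord`) and `cov` is the `g`-coaction on `V`. -/
noncomputable def dK {ι : Type*} [Fintype ι] (b : Module.Basis ι k g)
    (cov : V →ₗ[k] g ⊗[k] V) (n : ℕ)
    (γ : (Fin (n + 1) → g) → V) : (Fin n → g) → V :=
  fun Y => ∑ i : ι, coactL k g V cov (b.coord i) (γ (Fin.cons (b i) Y))

end CE

/-!
For `Φ : V → g ⊗ V` and a linear map `w : g → V` put `κ_Φ(w) = Σ_i w(X_i)·f^i`, computed
through `Φ`, so that `d_K γ (Z) = κ_∇(γ(-, Z))`. Expanding `d_CE (d_K γ)` and `d_K (d_CE γ)`, the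
terms in which `γ` eats a bracket `[Y_i, Y_j]` cancel because `γ` is alternating, and what remains is
`(d_CE d_K + d_K d_CE) γ (Y) = −κ_∇(γ(Y)·-) + Σ_r (−1)^r κ_{D(Y_r)}(γ(-, Y_0, …, Ŷ_r, …, Y_n))`,
where `D(X)(v) = ∇(v·X) − v₍₋₁₎ ⊗ v₍₀₎·X − [v₍₋₁₎, X] ⊗ v₍₀₎` is the anti-Yetter–Drinfeld defect.
The first term is the unimodular-stability expression. Since `κ_Φ(f ⊗ v) = f(v₍₋₁₎)v₍₀₎`, `κ_Φ`
vanishes identically only for `Φ = 0`, so the identity in degrees `0` and `1` already forces both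
conditions, and conversely both conditions make every term vanish.
-/

section Contraction

variable {k g V ι : Type*} [Field k] [AddCommGroup g] [Module k g] [AddCommGroup V] [Module k V]

lemma coactL_apply (Φ : V →ₗ[k] g ⊗[k] V) (f : Module.Dual k g) (v : V) :
    coactL k g V Φ f v = TensorProduct.lid k V (f.rTensor V (Φ v)) := rfl

lemma coactL_sub (Φ Ψ : V →ₗ[k] g ⊗[k] V) (f : Module.Dual k g) :
    coactL k g V (Φ - Ψ) f = coactL k g V Φ f - coactL k g V Ψ f := by
  ext v
  simp [coactL_apply]

lemma coactL_lTensor_comp (Φ : V →ₗ[k] g ⊗[k] V) (ρ : V →ₗ[k] V) (f : Module.Dual k g) :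
    coactL k g V (ρ.lTensor g ∘ₗ Φ) f = ρ ∘ₗ coactL k g V Φ f := by
  ext v
  simp only [LinearMap.comp_apply, coactL_apply]
  induction Φ v using TensorProduct.induction_on with
  | zero => simp
  | tmul u m => simp
  | add x y hx hy => simp_all

lemma coactL_rTensor_comp (Φ : V →ₗ[k] g ⊗[k] V) (ψ : g →ₗ[k] g) (f : Module.Dual k g) :
    coactL k g V (ψ.rTensor V ∘ₗ Φ) f = coactL k g V Φ (f ∘ₗ ψ) := by
  ext v
  simp [coactL_apply, LinearMap.rTensor_comp_apply]

variable (b : Module.Basis ι k g)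

lemma coactL_ext {Φ Ψ : V →ₗ[k] g ⊗[k] V}
    (h : ∀ i, coactL k g V Φ (b.coord i) = coactL k g V Ψ (b.coord i)) : Φ = Ψ := by
  classical
  ext v
  refine (TensorProduct.equivFinsuppOfBasisLeft b).injective (Finsupp.ext fun i => ?_)
  simpa [TensorProduct.equivFinsuppOfBasisLeft_apply, coactL_apply] using
    LinearMap.congr_fun (h i) v

variable [Fintype ι]

lemma sum_smul_coactL_coord (Φ : V →ₗ[k] g ⊗[k] V) (φ : Module.Dual k g) (v : V) :
    ∑ i, φ (b i) • coactL k g V Φ (b.coord i) v = coactL k g V Φ φ v := by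
  conv_rhs => rw [← b.sum_dual_apply_smul_coord φ, coactL_apply, ← LinearMap.coe_rTensorHom]
  simp only [map_sum, map_smul, LinearMap.sum_apply, LinearMap.smul_apply,
    LinearMap.coe_rTensorHom, coactL_apply]

noncomputable def koszulContract (Φ : V →ₗ[k] g ⊗[k] V) (w : g →ₗ[k] V) : V :=
  ∑ i, coactL k g V Φ (b.coord i) (w (b i))

lemma koszulContract_smulRight (Φ : V →ₗ[k] g ⊗[k] V) (f : Module.Dual k g) (v : V) :
    koszulContract b Φ (f.smulRight v) = coactL k g V Φ f v := by
  simp only [koszulContract, LinearMap.smulRight_apply, map_smul]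
  exact sum_smul_coactL_coord b Φ f v

@[simp]
lemma koszulContract_zero_left (w : g →ₗ[k] V) : koszulContract b 0 w = 0 := by
  simp [koszulContract, coactL_apply]

lemma koszulContract_sub (Φ Ψ : V →ₗ[k] g ⊗[k] V) (w : g →ₗ[k] V) :
    koszulContract b (Φ - Ψ) w = koszulContract b Φ w - koszulContract b Ψ w := by
  simp only [koszulContract, coactL_sub, LinearMap.sub_apply, Finset.sum_sub_distrib]

lemma koszulContract_comp (Φ : V →ₗ[k] g ⊗[k] V) (ρ : V →ₗ[k] V) (w : g →ₗ[k] V) :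
    koszulContract b (Φ ∘ₗ ρ) w = koszulContract b Φ (ρ ∘ₗ w) := rfl

lemma koszulContract_lTensor_comp (Φ : V →ₗ[k] g ⊗[k] V) (ρ : V →ₗ[k] V) (w : g →ₗ[k] V) :
    koszulContract b (ρ.lTensor g ∘ₗ Φ) w = ρ (koszulContract b Φ w) := by
  simp only [koszulContract, coactL_lTensor_comp, LinearMap.comp_apply, map_sum]

lemma koszulContract_rTensor_comp (Φ : V →ₗ[k] g ⊗[k] V) (ψ : g →ₗ[k] g) (w : g →ₗ[k] V) :
    koszulContract b (ψ.rTensor V ∘ₗ Φ) w = koszulContract b Φ (w ∘ₗ ψ) := by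
  have hw (i : ι) : w (ψ (b i)) = ∑ j, b.coord j (ψ (b i)) • w (b j) := by
    conv_lhs => rw [← b.sum_repr (ψ (b i)), map_sum]
    simp only [map_smul, Module.Basis.coord_apply]
  simp only [koszulContract, coactL_rTensor_comp, LinearMap.comp_apply, hw, map_sum, map_smul]
  rw [Finset.sum_comm]
  exact Finset.sum_congr rfl fun j _ => (sum_smul_coactL_coord b Φ _ _).symm

lemma eq_zero_of_koszulContract_eq_zero {Φ : V →ₗ[k] g ⊗[k] V}
    (h : ∀ w, koszulContract b Φ w = 0) : Φ = 0 := by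
  refine coactL_ext b fun i => LinearMap.ext fun v => ?_
  rw [← koszulContract_smulRight b, h]
  simp [coactL_apply]

end Contraction

section FirstSlot

variable {k g V : Type*} [Field k] [AddCommGroup g] [Module k g] [AddCommGroup V] [Module k V]

def firstSlot {n : ℕ} (γ : AlternatingMap k g V (Fin (n + 1))) (Z : Fin n → g) : g →ₗ[k] V :=
  γ.toMultilinearMap.toLinearMap (Fin.cons 0 Z) 0

@[simp]
lemma firstSlot_apply {n : ℕ} (γ : AlternatingMap k g V (Fin (n + 1))) (Z : Fin n → g) (u : g) :
    firstSlot γ Z u = γ (Fin.cons u Z) := by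
  simp [firstSlot, MultilinearMap.toLinearMap_apply, Fin.update_cons_zero]

lemma firstSlot_ofSubsingleton (w : g →ₗ[k] V) (Z : Fin 0 → g) :
    firstSlot (AlternatingMap.ofSubsingleton k g V (0 : Fin 1) w) Z = w := by
  ext u
  simp

end FirstSlot

lemma Fin.removeNth_succ_cons {α : Type*} {n : ℕ} (r : Fin (n + 1)) (x : α)
    (Y : Fin (n + 1) → α) :
    Fin.removeNth r.succ (Fin.cons x Y : Fin (n + 2) → α) = Fin.cons x (Fin.removeNth r Y) := by
  funext p
  cases p using Fin.cases <;> simp [Fin.removeNth_apply]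

section AntiYetterDrinfeld

variable {k g V : Type*} [Field k] [LieRing g] [LieAlgebra k g] [AddCommGroup V] [Module k V]

lemma neg_ad_apply (X u : g) : (-LieAlgebra.ad k g X) u = ⁅u, X⁆ := by
  rw [LinearMap.neg_apply, LieAlgebra.ad_apply, ← lie_skew, neg_neg]

noncomputable def aydDefect (cov : V →ₗ[k] g ⊗[k] V) (a : V →ₗ[k] g →ₗ[k] V) (X : g) :
    V →ₗ[k] g ⊗[k] V :=
  cov ∘ₗ a.flip X - (a.flip X).lTensor g ∘ₗ cov - (-LieAlgebra.ad k g X).rTensor V ∘ₗ cov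

lemma aydDefect_eq_zero_iff (cov : V →ₗ[k] g ⊗[k] V) (a : V →ₗ[k] g →ₗ[k] V) (X : g) :
    aydDefect cov a X = 0 ↔ ∀ v, cov (a v X) =
      (a.flip X).lTensor g (cov v) + (-LieAlgebra.ad k g X).rTensor V (cov v) := by
  simp only [aydDefect, LinearMap.ext_iff, sub_sub, LinearMap.add_apply,
    LinearMap.comp_apply, LinearMap.flip_apply, sub_eq_zero]

lemma koszulContract_aydDefect {ι : Type*} [Fintype ι] (b : Module.Basis ι k g)
    (cov : V →ₗ[k] g ⊗[k] V) (a : V →ₗ[k] g →ₗ[k] V) (X : g) (w : g →ₗ[k] V) :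
    koszulContract b (aydDefect cov a X) w = koszulContract b cov (a.flip X ∘ₗ w)
      - a (koszulContract b cov w) X - koszulContract b cov (w ∘ₗ (-LieAlgebra.ad k g X)) := by
  rw [aydDefect, koszulContract_sub, koszulContract_sub, koszulContract_comp,
    koszulContract_lTensor_comp, koszulContract_rTensor_comp, LinearMap.flip_apply]

end AntiYetterDrinfeld

section CochainFormulas

variable {k g V : Type*} [Field k] [LieRing g] [LieAlgebra k g] [AddCommGroup V] [Module k V]

-- Verbatim the argument tuple of the bracket terms of `dCE`, so that `dCE_eq` holds by `rfl`.
def bracketArgs (n : ℕ) (Y : Fin (n + 1) → g) (i j : Fin (n + 1))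
    (h : (i : ℕ) < j) : Fin n → g :=
  fun p : Fin n =>
    (Fin.cons ⁅Y i, Y j⁆
      (Fin.removeNth
        (⟨(i : ℕ), by have := j.isLt; omega⟩ : Fin (n - 1 + 1))
        (fun q : Fin (n - 1 + 1) =>
          Fin.removeNth j Y (Fin.cast (by have := j.isLt; omega) q)))
      : Fin (n - 1 + 1) → g)
      (Fin.cast (by have := j.isLt; omega) p)

noncomputable def bracketSum (n : ℕ) (γ : (Fin n → g) → V) (Y : Fin (n + 1) → g) : V :=
  ∑ i : Fin (n + 1), ∑ j : Fin (n + 1),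
    if h : (i : ℕ) < j then ((-1 : ℤ) ^ ((i : ℕ) + j)) • γ (bracketArgs n Y i j h) else 0

lemma dCE_eq (a : V →ₗ[k] g →ₗ[k] V) (n : ℕ) (γ : (Fin n → g) → V) (Y : Fin (n + 1) → g) :
    dCE k g V a n γ Y = bracketSum n γ Y
      + ∑ j : Fin (n + 1), ((-1 : ℤ) ^ ((j : ℕ) + 1)) • a (γ (Fin.removeNth j Y)) (Y j) :=
  rfl

lemma bracketArgs_succ {n : ℕ} (Y : Fin (n + 2) → g) (i j : Fin (n + 2)) (h : (i : ℕ) < j) :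
    bracketArgs (n + 1) Y i j h
      = Fin.cons ⁅Y i, Y j⁆ (Fin.removeNth ⟨i, by omega⟩ (Fin.removeNth j Y)) :=
  rfl

lemma bracketArgs_cons_zero_succ {n : ℕ} (X : g) (Y : Fin (n + 1) → g) (s : Fin (n + 1))
    (h : ((0 : Fin (n + 2)) : ℕ) < s.succ) :
    bracketArgs (n + 1) (Fin.cons X Y) 0 s.succ h = Fin.cons ⁅X, Y s⁆ (Fin.removeNth s Y) := by
  rw [bracketArgs_succ, Fin.removeNth_succ_cons]
  simp

lemma bracketArgs_cons_succ_succ {n : ℕ} (X : g) (Y : Fin (n + 1) → g) (p s : Fin (n + 1))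
    (h : (p.succ : ℕ) < s.succ) (h' : (p : ℕ) < s) :
    bracketArgs (n + 1) (Fin.cons X Y) p.succ s.succ h
      = Fin.cons X (bracketArgs n Y p s h') ∘ Equiv.swap 0 1 := by
  obtain ⟨m, rfl⟩ : ∃ m, n = m + 1 := ⟨n - 1, by omega⟩
  have hp : (⟨p.succ, by omega⟩ : Fin (m + 2)) = (⟨p, by omega⟩ : Fin (m + 1)).succ := rfl
  rw [bracketArgs_succ, bracketArgs_succ, Fin.removeNth_succ_cons, hp, Fin.removeNth_succ_cons]
  exact (Matrix.cons_cons_comp_swap_zero_one _ _ _).symm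

lemma bracketSum_cons {n : ℕ} (γ : AlternatingMap k g V (Fin (n + 1))) (X : g)
    (Y : Fin (n + 1) → g) :
    bracketSum (n + 1) γ (Fin.cons X Y)
      = ∑ s : Fin (n + 1), ((-1 : ℤ) ^ ((s : ℕ) + 1)) • γ (Fin.cons ⁅X, Y s⁆ (Fin.removeNth s Y))
        - bracketSum n (fun Z => γ (Fin.cons X Z)) Y := by
  rw [bracketSum, Fin.sum_univ_succ, Fin.sum_univ_succ, dif_neg (lt_irrefl _), zero_add,
    sub_eq_add_neg, bracketSum, ← Finset.sum_neg_distrib]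
  congr 1
  · refine Finset.sum_congr rfl fun s _ => ?_
    rw [dif_pos (show ((0 : Fin (n + 2)) : ℕ) < s.succ from s.succ_pos),
      bracketArgs_cons_zero_succ]
    simp
  · refine Finset.sum_congr rfl fun p _ => ?_
    rw [Fin.sum_univ_succ, dif_neg (by simp), zero_add, ← Finset.sum_neg_distrib]
    refine Finset.sum_congr rfl fun s _ => ?_
    by_cases h : (p : ℕ) < s
    · rw [dif_pos (by simpa using h), dif_pos h, bracketArgs_cons_succ_succ X Y p s _ h,
        γ.map_swap _ (by simp; omega)]
      simp [pow_add]
    · rw [dif_neg (by simpa using h), dif_neg h, neg_zero]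

lemma dCE_succ_cons (a : V →ₗ[k] g →ₗ[k] V) {n : ℕ} (γ : AlternatingMap k g V (Fin (n + 1)))
    (X : g) (Y : Fin (n + 1) → g) :
    dCE k g V a (n + 1) γ (Fin.cons X Y)
      = ∑ s : Fin (n + 1), ((-1 : ℤ) ^ ((s : ℕ) + 1)) • γ (Fin.cons ⁅X, Y s⁆ (Fin.removeNth s Y))
        - bracketSum n (fun Z => γ (Fin.cons X Z)) Y - a (γ Y) X
        + ∑ r : Fin (n + 1), ((-1 : ℤ) ^ (r : ℕ)) • a (γ (Fin.cons X (Fin.removeNth r Y))) (Y r) := by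
  rw [dCE_eq, bracketSum_cons, Fin.sum_univ_succ (n := n + 1)]
  simp only [pow_succ, pow_zero, mul_neg, mul_one, neg_smul, one_smul,
    Finset.sum_neg_distrib, Fin.val_zero, Fin.val_succ, zero_add, neg_neg, Fin.removeNth_zero,
    Fin.tail_cons, Fin.cons_zero, Fin.cons_succ, Fin.removeNth_succ_cons]
  abel

variable {ι : Type*} [Fintype ι] (b : Module.Basis ι k g) (cov : V →ₗ[k] g ⊗[k] V)

lemma dK_eq_koszulContract {n : ℕ} (γ : AlternatingMap k g V (Fin (n + 1))) (Z : Fin n → g) :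
    dK k g V b cov n γ Z = koszulContract b cov (firstSlot γ Z) := by
  simp [dK, koszulContract]

lemma sum_coactL_bracketSum {n : ℕ} (γ : (Fin (n + 1) → g) → V) (Y : Fin (n + 1) → g) :
    ∑ t, coactL k g V cov (b.coord t) (bracketSum n (fun Z => γ (Fin.cons (b t) Z)) Y)
      = bracketSum n (dK k g V b cov n γ) Y := by
  simp only [bracketSum, dK, map_sum, apply_dite, map_zsmul, map_zero, Finset.smul_sum]
  rw [Finset.sum_comm]
  refine Finset.sum_congr rfl fun i _ => ?_
  rw [Finset.sum_comm]
  refine Finset.sum_congr rfl fun j _ => ?_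
  split_ifs <;> simp

lemma dCE_dK (a : V →ₗ[k] g →ₗ[k] V) {n : ℕ} (γ : AlternatingMap k g V (Fin (n + 1)))
    (Y : Fin (n + 1) → g) :
    dCE k g V a n (dK k g V b cov n γ) Y = bracketSum n (dK k g V b cov n γ) Y
      + ∑ s : Fin (n + 1), ((-1 : ℤ) ^ ((s : ℕ) + 1)) •
          a (koszulContract b cov (firstSlot γ (Fin.removeNth s Y))) (Y s) := by
  simp only [dCE_eq, dK_eq_koszulContract]

lemma dK_dCE_succ (a : V →ₗ[k] g →ₗ[k] V) {n : ℕ} (γ : AlternatingMap k g V (Fin (n + 1)))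
    (Y : Fin (n + 1) → g) :
    dK k g V b cov (n + 1) (dCE k g V a (n + 1) γ) Y
      = ∑ s : Fin (n + 1), ((-1 : ℤ) ^ ((s : ℕ) + 1)) •
          koszulContract b cov (firstSlot γ (Fin.removeNth s Y) ∘ₗ (-LieAlgebra.ad k g (Y s)))
        - bracketSum n (dK k g V b cov n γ) Y - koszulContract b cov (a (γ Y))
        + ∑ r : Fin (n + 1), ((-1 : ℤ) ^ (r : ℕ)) •
          koszulContract b cov (a.flip (Y r) ∘ₗ firstSlot γ (Fin.removeNth r Y)) := by
  have hdK : dK k g V b cov (n + 1) (dCE k g V a (n + 1) γ) Y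
      = ∑ t, coactL k g V cov (b.coord t) (dCE k g V a (n + 1) γ (Fin.cons (b t) Y)) := rfl
  simp only [hdK, dCE_succ_cons, map_add, map_sub, map_sum, map_zsmul, Finset.sum_add_distrib,
    Finset.sum_sub_distrib, sum_coactL_bracketSum, koszulContract, Finset.smul_sum,
    LinearMap.comp_apply, firstSlot_apply, neg_ad_apply, LinearMap.flip_apply]
  rw [Finset.sum_comm (s := (Finset.univ : Finset ι)),
    Finset.sum_comm (s := (Finset.univ : Finset ι))]

theorem dCE_dK_add_dK_dCE (a : V →ₗ[k] g →ₗ[k] V) {n : ℕ}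
    (γ : AlternatingMap k g V (Fin (n + 1))) (Y : Fin (n + 1) → g) :
    dCE k g V a n (dK k g V b cov n γ) Y + dK k g V b cov (n + 1) (dCE k g V a (n + 1) γ) Y
      = -koszulContract b cov (a (γ Y)) + ∑ r : Fin (n + 1), ((-1 : ℤ) ^ (r : ℕ)) •
          koszulContract b (aydDefect cov a (Y r)) (firstSlot γ (Fin.removeNth r Y)) := by
  simp only [dCE_dK, dK_dCE_succ, koszulContract_aydDefect, pow_succ, mul_neg_one, neg_smul,
    smul_sub, Finset.sum_sub_distrib, Finset.sum_neg_distrib]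
  abel

lemma dK_dCE_zero (a : V →ₗ[k] g →ₗ[k] V) (γ : (Fin 0 → g) → V) (Y : Fin 0 → g) :
    dK k g V b cov 0 (dCE k g V a 0 γ) Y = -koszulContract b cov (a (γ Y)) := by
  simp [dK, dCE_eq, bracketSum, koszulContract, Subsingleton.elim _ Y]

end CochainFormulas

theorem statement3_general (k : Type*) [Field k]
    (g : Type*) [LieRing g] [LieAlgebra k g]
    (ι : Type*) [Fintype ι] (b : Module.Basis ι k g)
    (V : Type*) [AddCommGroup V] [Module k V]
    (cov : V →ₗ[k] g ⊗[k] V)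
    (a : V →ₗ[k] g →ₗ[k] V) :
    ((∀ (n : ℕ) (γ : AlternatingMap k g V (Fin (n + 1))) (Y : Fin (n + 1) → g),
        dCE k g V a n (dK k g V b cov n ⇑γ) Y
          + dK k g V b cov (n + 1) (dCE k g V a (n + 1) ⇑γ) Y = 0) ∧
      (∀ (γ : AlternatingMap k g V (Fin 0)) (Y : Fin 0 → g),
        dK k g V b cov 0 (dCE k g V a 0 ⇑γ) Y = 0))
    ↔
    ((∀ v : V, ∑ i : ι, coactL k g V cov (b.coord i) (a v (b i)) = 0) ∧
      (∀ (v : V) (X : g),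
        cov (a v X) =
          (LinearMap.lTensor g (a.flip X)) (cov v)
            + (LinearMap.rTensor V (-(LieAlgebra.ad k g X))) (cov v))) := by
  constructor
  · rintro ⟨hsucc, hzero⟩
    have hstable (v : V) : koszulContract b cov (a v) = 0 := by
      simpa [dK_dCE_zero] using hzero (AlternatingMap.constOfIsEmpty k g (Fin 0) v) Fin.elim0
    refine ⟨hstable, fun v X => (aydDefect_eq_zero_iff cov a X).1 ?_ v⟩
    refine eq_zero_of_koszulContract_eq_zero b fun w => ?_
    simpa [dCE_dK_add_dK_dCE, hstable, firstSlot_ofSubsingleton] using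
      hsucc 0 (AlternatingMap.ofSubsingleton k g V (0 : Fin 1) w) ![X]
  · rintro ⟨hstable, hayd⟩
    change ∀ v, koszulContract b cov (a v) = 0 at hstable
    have hdefect (X : g) : aydDefect cov a X = 0 :=
      (aydDefect_eq_zero_iff cov a X).2 fun v => hayd v X
    refine ⟨fun n γ Y => ?_, fun γ Y => ?_⟩
    · simp [dCE_dK_add_dK_dCE, hstable, hdefect]
    · simpa [dK_dCE_zero] using hstable (γ Y)

/-- For a finite-dimensional Lie algebra `g` with basis `{X_i}`, dual basis
`{f^i}`, and `V` a right `g`-module and left `g`-comodule, the identity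
`d_CE ∘ d_K + d_K ∘ d_CE = 0` holds on alternating cochains `W^n(g,V)` in every degree
`n ≥ 0` (in degree `0` the Koszul boundary out of `W^0` is zero, so the identity reads
`d_K ∘ d_CE = 0` there) if and only if `V` is a unimodular stable anti-Yetter–Drinfeld
module over `g`, i.e. (i) `Σ_i (v·X_i)·f^i = 0` for all `v` (unimodular stability) and
(ii) `cov(v·X) = v₍₋₁₎ ⊗ (v₍₀₎·X) + [v₍₋₁₎, X] ⊗ v₍₀₎` for all `v, X` (the AYD
condition). -/
theorem statement3 (k : Type*) [Field k]
    (g : Type*) [LieRing g] [LieAlgebra k g]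
    (ι : Type*) [Fintype ι] [DecidableEq ι] (b : Module.Basis ι k g)
    (V : Type*) [AddCommGroup V] [Module k V]
    (cov : V →ₗ[k] g ⊗[k] V)
    (hcomod : ∀ v : V,
      flip12 k g V ((LinearMap.lTensor g cov) (cov v)) = (LinearMap.lTensor g cov) (cov v))
    (a : V →ₗ[k] g →ₗ[k] V)
    (ha : ∀ (v : V) (X Y : g), a v ⁅X, Y⁆ = a (a v X) Y - a (a v Y) X) :
    ((∀ (n : ℕ) (γ : AlternatingMap k g V (Fin (n + 1))) (Y : Fin (n + 1) → g),
        dCE k g V a n (dK k g V b cov n ⇑γ) Y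
          + dK k g V b cov (n + 1) (dCE k g V a (n + 1) ⇑γ) Y = 0) ∧
      (∀ (γ : AlternatingMap k g V (Fin 0)) (Y : Fin 0 → g),
        dK k g V b cov 0 (dCE k g V a 0 ⇑γ) Y = 0))
    ↔
    ((∀ v : V, ∑ i : ι, coactL k g V cov (b.coord i) (a v (b i)) = 0) ∧
      (∀ (v : V) (X : g),
        cov (a v X) =
          (LinearMap.lTensor g (a.flip X)) (cov v)
            + (LinearMap.rTensor V (-(LieAlgebra.ad k g X))) (cov v))) :=
  statement3_general k g ι b V cov a
end

section
/- Let A be an associative topological algebra over 𝕜 ∈ {ℝ, ℂ} (a topological vector space with separately continuous multiplication) which is locally convex. Suppose A admits a base 𝒰 of absolutely convex (i.e. convex and balanced) neighborhoods of 0 with the property that for each V ∈ 𝒰 there exist U ∈ 𝒰 and a constant C > 0 such that U·V ⊆ C•V, where U·V = {uv : u ∈ U, v ∈ V}. Then A is locally multiplicatively convex: its topology can be defined by a family of submultiplicative seminorms, i.e. seminorms ρ satisfying ρ(ab) ≤ ρ(a)ρ(b) for all a, b ∈ A. -/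
/-!
Given `V ∈ 𝒰`, let `W` be the set of left multipliers of `V`, i.e. of those `x` with `x V ⊆ V`.
It is absolutely convex, closed under multiplication, and it is a neighbourhood of `0` because
`U V ⊆ C V` gives `C⁻¹ U ⊆ W`. Hence its gauge is a continuous submultiplicative seminorm.
Writing `1 = λ v₀` with `v₀ ∈ V` gives `W ⊆ λ V`, so a small ball of that gauge lies in `V`;
thus the continuous submultiplicative seminorms define the topology.
-/

open Filter Pointwise Set Topology

theorem gauge_mul_le_of_mul_subset {A : Type*} [NonUnitalRing A] [Module ℝ A]
    [IsScalarTower ℝ A A] [SMulCommClass ℝ A A] {W : Set A} (hW : Absorbent ℝ W)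
    (hWW : W * W ⊆ W) (x y : A) : gauge W (x * y) ≤ gauge W x * gauge W y := by
  refine le_mul_of_forall_lt₀ fun a ha b hb => ?_
  obtain ⟨a', ha'0, ha'a, u, hu, rfl⟩ := exists_lt_of_gauge_lt hW ha
  obtain ⟨b', hb'0, hb'b, v, hv, rfl⟩ := exists_lt_of_gauge_lt hW hb
  have hmem : (a' • u) * (b' • v) ∈ (a' * b') • W := by
    rw [smul_mul_smul_comm]
    exact smul_mem_smul_set (hWW (mul_mem_mul hu hv))
  calc gauge W ((a' • u) * (b' • v)) ≤ a' * b' := gauge_le_of_mem (by positivity) hmem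
    _ ≤ a * b := mul_le_mul ha'a.le hb'b.le hb'0.le (ha'0.le.trans ha'a.le)

section LeftMultipliers

variable {A : Type*}

def leftMultipliers [Mul A] (V : Set A) : Set A :=
  {x | MapsTo (x * ·) V V}

theorem leftMultipliers_mul_subset [Semigroup A] (V : Set A) :
    leftMultipliers V * leftMultipliers V ⊆ leftMultipliers V := by
  rintro _ ⟨x, hx, y, hy, rfl⟩ v hv
  simpa only [mul_assoc] using hx (hy hv)

theorem Convex.leftMultipliers {𝕜 : Type*} [Semiring 𝕜] [PartialOrder 𝕜]
    [NonUnitalNonAssocSemiring A] [Module 𝕜 A] [IsScalarTower 𝕜 A A] {V : Set A}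
    (hV : Convex 𝕜 V) : Convex 𝕜 (leftMultipliers V) := by
  intro x hx y hy a b ha hb hab v hv
  simpa only [add_mul, smul_mul_assoc] using hV (hx hv) (hy hv) ha hb hab

theorem Balanced.leftMultipliers {𝕜 : Type*} [SeminormedRing 𝕜]
    [NonUnitalNonAssocSemiring A] [Module 𝕜 A] [IsScalarTower 𝕜 A A] {V : Set A}
    (hV : Balanced 𝕜 V) : Balanced 𝕜 (leftMultipliers V) := by
  rintro a ha _ ⟨x, hx, rfl⟩ v hv
  simpa only [smul_mul_assoc] using hV a ha (smul_mem_smul_set (hx hv))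

theorem inv_smul_subset_leftMultipliers {G : Type*} [GroupWithZero G] [Mul A] [MulAction G A]
    [IsScalarTower G A A] {U V : Set A} {c : G} (hc : c ≠ 0) (hUV : U * V ⊆ c • V) :
    c⁻¹ • U ⊆ leftMultipliers V := by
  rintro _ ⟨u, hu, rfl⟩ v hv
  obtain ⟨w, hw, hwuv⟩ := hUV (mul_mem_mul hu hv)
  simpa only [smul_mul_assoc, ← hwuv, inv_smul_smul₀ hc] using hw

theorem leftMultipliers_subset_smul {G : Type*} [MulOneClass A] [SMul G A]
    [SMulCommClass G A A] {V : Set A} {c : G} (h : (1 : A) ∈ c • V) :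
    leftMultipliers V ⊆ c • V := by
  intro x hx
  obtain ⟨v, hv, hv1⟩ := h
  rw [← mul_one x, ← hv1, mul_smul_comm]
  exact smul_mem_smul_set (hx hv)

end LeftMultipliers

theorem SeminormFamily.withSeminorms_of_continuous_of_exists_ball_subset {𝕜 E ι : Type*}
    [NormedField 𝕜] [AddCommGroup E] [Module 𝕜 E] [Nonempty ι] [TopologicalSpace E]
    [IsTopologicalAddGroup E] (p : SeminormFamily 𝕜 E ι) (hcont : ∀ i, Continuous (p i))
    (hball : ∀ V ∈ 𝓝 (0 : E), ∃ i, ∃ r > 0, (p i).ball 0 r ⊆ V) : WithSeminorms p := by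
  refine p.withSeminorms_iff_nhds_eq_iInf.mpr (le_antisymm ?_ ?_)
  · exact le_iInf fun i => ((hcont i).tendsto' 0 0 (map_zero _)).le_comap
  · intro V hV
    obtain ⟨i, r, hr, hrV⟩ := hball V hV
    refine mem_iInf_of_mem i (mem_of_superset (preimage_mem_comap (Metric.ball_mem_nhds 0 hr)) ?_)
    intro x hx
    rw [mem_preimage, mem_ball_zero_iff, Real.norm_of_nonneg (apply_nonneg _ _)] at hx
    exact hrV ((p i).mem_ball_zero.mpr hx)

theorem exists_continuous_submultiplicative_seminorm_ball_subset {𝕜 A : Type*} [RCLike 𝕜]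
    [Ring A] [Algebra 𝕜 A] [Module ℝ A] [IsScalarTower ℝ 𝕜 A] [IsScalarTower ℝ A A]
    [SMulCommClass ℝ A A] [TopologicalSpace A] [IsTopologicalAddGroup A] [ContinuousSMul ℝ A]
    {U V : Set A} (hU : U ∈ 𝓝 0) (hV : V ∈ 𝓝 0) (hVc : Convex ℝ V) (hVb : Balanced 𝕜 V)
    {C : ℝ} (hC : 0 < C) (hUV : U * V ⊆ C • V) :
    ∃ p : Seminorm 𝕜 A, (∀ a b, p (a * b) ≤ p a * p b) ∧ Continuous p ∧
      ∃ r > 0, p.ball 0 r ⊆ V := by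
  have hW : leftMultipliers V ∈ 𝓝 0 :=
    mem_of_superset ((set_smul_mem_nhds_zero_iff (inv_ne_zero hC.ne')).mpr hU)
      (inv_smul_subset_leftMultipliers hC.ne' hUV)
  have hWc : Convex ℝ (leftMultipliers V) := hVc.leftMultipliers
  have hWa : Absorbent ℝ (leftMultipliers V) := absorbent_nhds_zero hW
  obtain ⟨l, hl, -, h1⟩ := exists_lt_of_gauge_lt (absorbent_nhds_zero hV) (lt_add_one (gauge V 1))
  refine ⟨gaugeSeminorm hVb.leftMultipliers hWc hWa,
    gauge_mul_le_of_mul_subset hWa (leftMultipliers_mul_subset V), continuous_gauge hWc hW,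
    l⁻¹, inv_pos.mpr hl, fun x hx => ?_⟩
  have hlx : gauge (leftMultipliers V) (l • x) < 1 := by
    rw [Seminorm.mem_ball_zero] at hx
    rwa [gauge_smul_of_nonneg hl.le, smul_eq_mul, ← lt_inv_mul_iff₀ hl, mul_one]
  have hlxW := setOfPred_gauge_lt_one_subset_self hWc (mem_of_mem_nhds hW) hWa hlx
  exact (smul_mem_smul_set_iff₀ hl.ne' _ _).mp (leftMultipliers_subset_smul h1 hlxW)

theorem statement11_general (𝕜 : Type) [RCLike 𝕜]
    (A : Type) [Ring A] [Algebra 𝕜 A]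
    [Module ℝ A] [IsScalarTower ℝ 𝕜 A]
    [TopologicalSpace A] [IsTopologicalAddGroup A] [ContinuousSMul 𝕜 A]
    (𝒰 : Set (Set A))
    (hbasis : (nhds (0 : A)).HasBasis (fun U : Set A => U ∈ 𝒰) id)
    (hconv : ∀ U ∈ 𝒰, Convex ℝ U)
    (hbal : ∀ U ∈ 𝒰, Balanced 𝕜 U)
    (habs : ∀ V ∈ 𝒰, ∃ U ∈ 𝒰, ∃ C : ℝ, 0 < C ∧
      Set.image2 (fun u v : A => u * v) U V ⊆ (C • V : Set A)) :
    ∃ (s : Set (Seminorm 𝕜 A)) (hs : s.Nonempty),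
      (∀ p ∈ s, ∀ a b : A, p (a * b) ≤ p a * p b) ∧
      (letI : Nonempty s := hs.to_subtype
       WithSeminorms (fun p : s => (p : Seminorm 𝕜 A))) := by
  have : ContinuousSMul ℝ A := IsScalarTower.continuousSMul 𝕜
  have : IsScalarTower ℝ A A := IsScalarTower.to₁₃₄ ℝ 𝕜 A A
  have : SMulCommClass ℝ A A := SMulCommClass.of_mul_smul_one fun r a => by
    rw [← smul_one_smul 𝕜 r (1 : A), mul_smul_comm, mul_one, smul_one_smul]
  let s : Set (Seminorm 𝕜 A) := {p | (∀ a b, p (a * b) ≤ p a * p b) ∧ Continuous p}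
  have hs : s.Nonempty := ⟨0, fun _ _ => by simp, continuous_const⟩
  refine ⟨s, hs, fun p hp => hp.1, ?_⟩
  have : Nonempty s := hs.to_subtype
  refine SeminormFamily.withSeminorms_of_continuous_of_exists_ball_subset _ (fun p => p.2.2)
    fun W hW => ?_
  obtain ⟨V, hV, hVW⟩ := hbasis.mem_iff.mp hW
  obtain ⟨U, hU, C, hC, hUV⟩ := habs V hV
  obtain ⟨p, hp_mul, hp_cont, r, hr, hpV⟩ :=
    exists_continuous_submultiplicative_seminorm_ball_subset (hbasis.mem_of_mem hU)
      (hbasis.mem_of_mem hV) (hconv V hV) (hbal V hV) hC hUV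
  exact ⟨⟨p, hp_mul, hp_cont⟩, r, hr, hpV.trans hVW⟩

/-- Let `A` be a locally convex associative topological algebra over
`𝕜 ∈ {ℝ, ℂ}` (separately continuous multiplication).  If `A` admits a base `𝒰` of
absolutely convex (convex and balanced) neighborhoods of `0` such that for each
`V ∈ 𝒰` there are `U ∈ 𝒰` and `C > 0` with `U·V ⊆ C•V`, then `A` is locally
multiplicatively convex: its topology is defined by a family of submultiplicative
seminorms. -/
theorem statement11 (𝕜 : Type) [RCLike 𝕜]
    (A : Type) [Ring A] [Algebra 𝕜 A]
    [Module ℝ A] [IsScalarTower ℝ 𝕜 A]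
    [TopologicalSpace A] [IsTopologicalAddGroup A] [ContinuousSMul 𝕜 A]
    (hmul_left : ∀ a : A, Continuous fun b : A => a * b)
    (hmul_right : ∀ b : A, Continuous fun a : A => a * b)
    (𝒰 : Set (Set A))
    (hbasis : (nhds (0 : A)).HasBasis (fun U : Set A => U ∈ 𝒰) id)
    (hconv : ∀ U ∈ 𝒰, Convex ℝ U)
    (hbal : ∀ U ∈ 𝒰, Balanced 𝕜 U)
    (habs : ∀ V ∈ 𝒰, ∃ U ∈ 𝒰, ∃ C : ℝ, 0 < C ∧
      Set.image2 (fun u v : A => u * v) U V ⊆ (C • V : Set A)) :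
    ∃ (s : Set (Seminorm 𝕜 A)) (hs : s.Nonempty),
      (∀ p ∈ s, ∀ a b : A, p (a * b) ≤ p a * p b) ∧
      (letI : Nonempty s := hs.to_subtype
       WithSeminorms (fun p : s => (p : Seminorm 𝕜 A))) :=
  statement11_general 𝕜 A 𝒰 hbasis hconv hbal habs
end
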